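/- arXiv:1810.08204 — 2 statements merged into one kernel-verified Lean document; each statement's English description precedes it below -/
import Mathlib

section
/- Zero-flux reduction of the double-semion phases: if a local configuration n ∈ {0,1}^12 satisfies the vertex-free (zero-flux) conditions — each of the six sums n₆+n₁+n₁₂, n₁+n₂+n₇, n₂+n₃+n₈, n₃+n₄+n₉, n₄+n₅+n₁₀, n₅+n₆+n₁₁ is even — then E(n) = 0, and hence b(n) = (−1)^{Σ_{j=1}^{6} n_{j−1}(1−n_j)}; i.e. on the vertex-free subspace the generalized plaquette phase of Eq. (12) reduces to 1 and the plaquette operator recovers the on-shell form of Eq. (6). -/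
/-- The integer occupation number of edge `j` (edges are numbered `1, …, 12` in the paper;
here `j : Fin 12` denotes edge `j+1`). -/
def occ (n : Fin 12 → ZMod 2) (j : Fin 12) : ℤ := ((n j).val : ℤ)

/-- The integer exponent `E(n)` of Eqs. (10)–(12): interior edges `1,…,6` are indices
`0,…,5`, outer legs `7,…,12` are indices `6,…,11`. -/
def Eexp (n : Fin 12 → ZMod 2) : ℤ :=
  occ n 11 * (occ n 0 * occ n 5 - (1 - occ n 0) * (1 - occ n 5)) +
  occ n 6 * ((1 - occ n 0) * (1 - occ n 1) - occ n 0 * occ n 1) +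
  (1 - occ n 7) * (occ n 1 * (1 - occ n 2) - (1 - occ n 1) * occ n 2) +
  occ n 8 * (occ n 2 * occ n 3 - (1 - occ n 2) * (1 - occ n 3)) +
  occ n 9 * ((1 - occ n 3) * (1 - occ n 4) - occ n 3 * occ n 4) +
  (1 - occ n 10) * (occ n 4 * (1 - occ n 5) - (1 - occ n 4) * occ n 5)

/-- The exponent `Σ_{j=1}^{6} n_{j−1}(1−n_j)` (with `n₀ := n₆`) of the `(−1)` factor. -/
def signExp (n : Fin 12 → ZMod 2) : ℤ :=
  occ n 5 * (1 - occ n 0) + occ n 0 * (1 - occ n 1) + occ n 1 * (1 - occ n 2) +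
  occ n 2 * (1 - occ n 3) + occ n 3 * (1 - occ n 4) + occ n 4 * (1 - occ n 5)

/-- The generalized plaquette phase `b(n) = (−1)^{Σ n_{j−1}(1−n_j)} · i^{E(n)}`. -/
noncomputable def plaqPhase (n : Fin 12 → ZMod 2) : ℂ :=
  (-1 : ℂ) ^ (signExp n) * Complex.I ^ (Eexp n)

/-- `n̄`: flip the six interior entries, leave the outer legs unchanged. -/
def flipInterior (n : Fin 12 → ZMod 2) : Fin 12 → ZMod 2 :=
  fun j => if (j : ℕ) < 6 then n j + 1 else n j

/-- The generalized plaquette operator `(B_p ψ)(n) = b(n̄) · ψ(n̄)`. -/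
noncomputable def plaqOp :
    EuclideanSpace ℂ (Fin 12 → ZMod 2) →ₗ[ℂ] EuclideanSpace ℂ (Fin 12 → ZMod 2) where
  toFun ψ := WithLp.toLp 2 (fun n => plaqPhase (flipInterior n) * ψ (flipInterior n))
  map_add' ψ φ := by
    ext c
    simp [mul_add]
  map_smul' a ψ := by
    ext c
    simp [mul_comm, mul_left_comm, mul_assoc]

/-! A leg of occupation `1` at a vertex with even sum forces exactly one of its two interior
edges to be occupied, so both `n_a n_b` and `(1 - n_a)(1 - n_b)` vanish; a leg of occupation `0`
forces `n_a = n_b`, so both `n_a (1 - n_b)` and `(1 - n_a) n_b` vanish. Hence every summand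
of `E(n)` is zero on a vertex-free configuration. -/

lemma occ_eq_zero_or_one (n : Fin 12 → ZMod 2) (j : Fin 12) : occ n j = 0 ∨ occ n j = 1 := by
  unfold occ
  generalize n j = x
  fin_cases x <;> decide

section VertexTerms

variable {a b c : ℤ}

lemma occupied_leg_term_eq_zero (ha : a = 0 ∨ a = 1) (hb : b = 0 ∨ b = 1) (hc : c = 0 ∨ c = 1)
    (h : Even (a + b + c)) : c * (a * b - (1 - a) * (1 - b)) = 0 := by
  obtain ⟨k, hk⟩ := h
  rcases ha with rfl | rfl <;> rcases hb with rfl | rfl <;> rcases hc with rfl | rfl <;> omega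

lemma empty_leg_term_eq_zero (ha : a = 0 ∨ a = 1) (hb : b = 0 ∨ b = 1) (hc : c = 0 ∨ c = 1)
    (h : Even (a + b + c)) : (1 - c) * (a * (1 - b) - (1 - a) * b) = 0 := by
  obtain ⟨k, hk⟩ := h
  rcases ha with rfl | rfl <;> rcases hb with rfl | rfl <;> rcases hc with rfl | rfl <;> omega

end VertexTerms

lemma Eexp_eq_zero_of_even (n : Fin 12 → ZMod 2)
    (h1 : Even (occ n 5 + occ n 0 + occ n 11))
    (h2 : Even (occ n 0 + occ n 1 + occ n 6))
    (h3 : Even (occ n 1 + occ n 2 + occ n 7))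
    (h4 : Even (occ n 2 + occ n 3 + occ n 8))
    (h5 : Even (occ n 3 + occ n 4 + occ n 9))
    (h6 : Even (occ n 4 + occ n 5 + occ n 10)) :
    Eexp n = 0 := by
  have h01 := occ_eq_zero_or_one n
  have t1 := occupied_leg_term_eq_zero (h01 5) (h01 0) (h01 11) h1
  have t2 := occupied_leg_term_eq_zero (h01 0) (h01 1) (h01 6) h2
  have t3 := empty_leg_term_eq_zero (h01 1) (h01 2) (h01 7) h3
  have t4 := occupied_leg_term_eq_zero (h01 2) (h01 3) (h01 8) h4
  have t5 := occupied_leg_term_eq_zero (h01 3) (h01 4) (h01 9) h5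
  have t6 := empty_leg_term_eq_zero (h01 4) (h01 5) (h01 10) h6
  unfold Eexp
  linear_combination t1 - t2 + t3 + t4 - t5 + t6

/-- Zero-flux reduction of the double-semion phases: on a vertex-free (zero-flux)
configuration — each of the six vertex sums is even — the exponent `E(n)` vanishes and the
generalized plaquette phase reduces to the on-shell form `(−1)^{Σ n_{j−1}(1−n_j)}`. -/
theorem zero_flux_reduction (n : Fin 12 → ZMod 2)
    (h1 : Even (occ n 5 + occ n 0 + occ n 11))
    (h2 : Even (occ n 0 + occ n 1 + occ n 6))
    (h3 : Even (occ n 1 + occ n 2 + occ n 7))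
    (h4 : Even (occ n 2 + occ n 3 + occ n 8))
    (h5 : Even (occ n 3 + occ n 4 + occ n 9))
    (h6 : Even (occ n 4 + occ n 5 + occ n 10)) :
    Eexp n = 0 ∧ plaqPhase n = (-1 : ℂ) ^ (signExp n) := by
  have hE := Eexp_eq_zero_of_even n h1 h2 h3 h4 h5 h6
  exact ⟨hE, by rw [plaqPhase, hE, zpow_zero, mul_one]⟩
end

section
/- Vertex operators commute with the generalized plaquette operator (last relation of Eq. (16), local form): for each of the six vertex triples (a, b, c) ∈ {(6,1,12), (1,2,7), (2,3,8), (3,4,9), (4,5,10), (5,6,11)}, the diagonal vertex operator Q on the space of functions ({0,1}^12 → ℂ) defined by (Q ψ)(n) = (−1)^{n_a + n_b + n_c} · ψ(n) commutes with the generalized plaquette operator B_p defined by (B_p ψ)(n) = b(n̄) · ψ(n̄), i.e. Q ∘ B_p = B_p ∘ Q. -/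
/-- The diagonal vertex operator `(Q ψ)(n) = (−1)^{n_a + n_b + n_c} ψ(n)` associated to a
vertex whose three edges are `a`, `b`, `c`. -/
noncomputable def vertexOp (a b c : Fin 12) :
    EuclideanSpace ℂ (Fin 12 → ZMod 2) →ₗ[ℂ] EuclideanSpace ℂ (Fin 12 → ZMod 2) where
  toFun ψ := WithLp.toLp 2 (fun n => (-1 : ℂ) ^ ((n a).val + (n b).val + (n c).val) * ψ n)
  map_add' ψ φ := by
    ext c
    simp [mul_add]
  map_smul' r ψ := by
    ext c
    simp [mul_comm, mul_left_comm, mul_assoc]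

/- Flipping the interior edges flips exactly two of the three edges at each vertex of the
plaquette (two interior edges and one outer leg), so the vertex sign is invariant under `n ↦ n̄`
and the diagonal operator `Q` commutes with `B_p`. -/

lemma neg_one_pow_val_add_one {R : Type*} [Monoid R] [HasDistribNeg R] (x : ZMod 2) :
    (-1 : R) ^ (x + 1).val = -(-1) ^ x.val := by
  fin_cases x
  · show (-1 : R) ^ 1 = -(-1) ^ 0
    simp
  · show (-1 : R) ^ 0 = -(-1) ^ 1
    simp

lemma vertexOp_apply (a b c : Fin 12) (ψ : EuclideanSpace ℂ (Fin 12 → ZMod 2))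
    (n : Fin 12 → ZMod 2) :
    vertexOp a b c ψ n = (-1 : ℂ) ^ ((n a).val + (n b).val + (n c).val) * ψ n :=
  rfl

lemma plaqOp_apply (ψ : EuclideanSpace ℂ (Fin 12 → ZMod 2)) (n : Fin 12 → ZMod 2) :
    plaqOp ψ n = plaqPhase (flipInterior n) * ψ (flipInterior n) :=
  rfl

lemma vertexOp_comp_plaqOp_of_sign_flipInterior {a b c : Fin 12}
    (h : ∀ n, (-1 : ℂ) ^ ((flipInterior n a).val + (flipInterior n b).val +
      (flipInterior n c).val) = (-1 : ℂ) ^ ((n a).val + (n b).val + (n c).val)) :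
    vertexOp a b c ∘ₗ plaqOp = plaqOp ∘ₗ vertexOp a b c := by
  ext1 ψ
  ext n
  simp only [LinearMap.comp_apply, vertexOp_apply, plaqOp_apply, h]
  ring

lemma sign_flipInterior {a b c : Fin 12} (ha : (a : ℕ) < 6) (hb : (b : ℕ) < 6)
    (hc : ¬(c : ℕ) < 6) (n : Fin 12 → ZMod 2) :
    (-1 : ℂ) ^ ((flipInterior n a).val + (flipInterior n b).val + (flipInterior n c).val) =
      (-1 : ℂ) ^ ((n a).val + (n b).val + (n c).val) := by
  simp only [flipInterior, ha, hb, hc, if_true, if_false, pow_add, neg_one_pow_val_add_one]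
  ring

/-- Vertex operators commute with the generalized plaquette operator (last relation of
Eq. (16), local form): for each of the six vertex triples `(6,1,12)`, `(1,2,7)`, `(2,3,8)`,
`(3,4,9)`, `(4,5,10)`, `(5,6,11)` (here written 0-based), the diagonal vertex operator
commutes with `B_p`. -/
theorem vertexOp_commutes_plaqOp :
    ∀ t ∈ ([(5, 0, 11), (0, 1, 6), (1, 2, 7), (2, 3, 8), (3, 4, 9), (4, 5, 10)] :
        List (Fin 12 × Fin 12 × Fin 12)),
      vertexOp t.1 t.2.1 t.2.2 ∘ₗ plaqOp = plaqOp ∘ₗ vertexOp t.1 t.2.1 t.2.2 := by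
  intro t ht
  fin_cases ht <;>
    exact vertexOp_comp_plaqOp_of_sign_flipInterior
      (sign_flipInterior (by decide) (by decide) (by decide))
end
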